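/- For n ≥ 1 and each integer i with 1 ≤ i ≤ ⌊n/2⌋ (with i ≤ n/2 − 1 when n is even), the vector (0,…,0 [i−1 zeros], n−2i, −1,…,−1 [n−2i entries], 0,…,0 [2i zeros], −1,…,−1 [n−2i entries], n−2i, 0,…,0 [i−1 zeros]) is an eigenvector of M(BP_n) with eigenvalue n−i. -/

import Mathlib

/-- The `n × n` diagonal matrix `A_n` with `(i,i)` entry `n - i` (for `1 ≤ i ≤ n`,
here `0`-indexed: entry `n - 1 - j`). -/
def An (n : ℕ) : Matrix (Fin n) (Fin n) ℝ :=
  Matrix.diagonal fun j => (n : ℝ) - (j : ℕ) - 1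

/-- The `n × n` diagonal matrix `C_n` with `(i,i)` entry `i - 1`. -/
def Cn (n : ℕ) : Matrix (Fin n) (Fin n) ℝ :=
  Matrix.diagonal fun j => ((j : ℕ) : ℝ)

/-- The `n × n` upper triangular all-ones matrix `D_n`. -/
def Dn (n : ℕ) : Matrix (Fin n) (Fin n) ℝ :=
  Matrix.of fun j k => if j ≤ k then 1 else 0

/-- The `2n × 2n` block matrix `M(BP_n) = [[A_n, D_nᵀ], [D_n, C_n]]`. -/
def Mbp (n : ℕ) : Matrix (Fin n ⊕ Fin n) (Fin n ⊕ Fin n) ℝ :=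
  Matrix.fromBlocks (An n) (Dn n).transpose (Dn n) (Cn n)

/-- The vector
`(0,…,0 [i-1 zeros], n-2i, -1,…,-1 [n-2i entries], 0,…,0 [2i zeros],
-1,…,-1 [n-2i entries], n-2i, 0,…,0 [i-1 zeros])` of length `2n`,
described positionally (0-indexed): in the first block, positions `< i-1` are
`0`, position `i-1` is `n-2i`, positions `i,…,n-i-1` are `-1`, and positions
`≥ n-i` are `0`; the second block is the mirror image. -/
def v9 (n i : ℕ) : Fin n ⊕ Fin n → ℝ :=
  Sum.elim
    (fun p => if (p : ℕ) < i - 1 then 0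
      else if (p : ℕ) = i - 1 then (n : ℝ) - 2 * i
      else if (p : ℕ) < n - i then -1 else 0)
    (fun q => if (q : ℕ) < i then 0
      else if (q : ℕ) < n - i then -1
      else if (q : ℕ) = n - i then (n : ℝ) - 2 * i else 0)


/-!
Multiplying by `D_nᵀ` takes prefix sums and multiplying by `D_n` takes suffix sums, so a row of
`M(BP_n) v` is a diagonal entry times a coordinate of one half of `v` plus a partial sum of the
other half. Both halves of `v9 n i` are piecewise constant with a single spike of height `n - 2i`
that cancels the run of `-1`s, so their partial sums have closed forms, and each row becomes a
linear identity in `n`, `i` and the row index.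
-/

open Finset Matrix

def v9Left (n i m : ℕ) : ℝ :=
  if m < i - 1 then 0 else if m = i - 1 then (n : ℝ) - 2 * i
  else if m < n - i then -1 else 0

def v9Right (n i m : ℕ) : ℝ :=
  if m < i then 0 else if m < n - i then -1
  else if m = n - i then (n : ℝ) - 2 * i else 0

lemma v9_eq_sumElim (n i : ℕ) :
    v9 n i = Sum.elim (fun p : Fin n => v9Left n i p) (fun q : Fin n => v9Right n i q) :=
  rfl

lemma sum_range_v9Right {n i : ℕ} (hi : 2 * i < n) (t : ℕ) :
    ∑ m ∈ range t, v9Right n i m =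
      if t ≤ i then 0 else if t ≤ n - i then (i : ℝ) - t else 0 := by
  induction t with
  | zero => simp
  | succ t ih =>
    have hni : ((n - i : ℕ) : ℝ) = n - i := Nat.cast_sub (by omega)
    rw [sum_range_succ, ih, v9Right]
    rcases (show t < i ∨ t = i ∨ (i < t ∧ t < n - i) ∨ t = n - i ∨ n - i < t by omega)
      with h | rfl | h | rfl | h <;>
    split_ifs <;> first | (exfalso; omega) | (push_cast [hni]; ring)

lemma sum_range_v9Left {n i : ℕ} (hi1 : 1 ≤ i) (hi2 : 2 * i < n) (t : ℕ) :
    ∑ m ∈ range t, v9Left n i m =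
      if t < i then 0 else if t ≤ n - i then (n : ℝ) - i - t else 0 := by
  induction t with
  | zero => rw [sum_range_zero, if_pos (by omega : 0 < i)]
  | succ t ih =>
    have hni : ((n - i : ℕ) : ℝ) = n - i := Nat.cast_sub (by omega)
    have hi : ((i - 1 : ℕ) : ℝ) = i - 1 := by rw [Nat.cast_sub hi1, Nat.cast_one]
    rw [sum_range_succ, ih, v9Left]
    rcases (show t < i - 1 ∨ t = i - 1 ∨ (i - 1 < t ∧ t < n - i) ∨ t = n - i ∨ n - i < t by omega)
      with h | rfl | h | rfl | h <;>
    split_ifs <;> first | (exfalso; omega) | (push_cast [hni, hi]; ring)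

lemma Dn_transpose_mulVec_apply {n : ℕ} (w : ℕ → ℝ) (p : Fin n) :
    ((Dn n)ᵀ *ᵥ fun k : Fin n => w k) p = ∑ m ∈ range (p + 1), w m := by
  have hfilter : (range n).filter (· ≤ (p : ℕ)) = range (p + 1) := by
    ext m; simp only [mem_filter, mem_range]; omega
  simp only [Matrix.mulVec, dotProduct, Matrix.transpose_apply, Dn, Matrix.of_apply, Fin.le_def,
    ite_mul, one_mul, zero_mul]
  rw [Fin.sum_univ_eq_sum_range (fun m => if m ≤ (p : ℕ) then w m else 0), ← sum_filter, hfilter]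

lemma Dn_mulVec_apply {n : ℕ} (w : ℕ → ℝ) (q : Fin n) :
    (Dn n *ᵥ fun k : Fin n => w k) q = ∑ m ∈ Ico (q : ℕ) n, w m := by
  have hfilter : (range n).filter ((q : ℕ) ≤ ·) = Ico (q : ℕ) n := by
    ext m; simp only [mem_filter, mem_range, mem_Ico]; omega
  simp only [Matrix.mulVec, dotProduct, Dn, Matrix.of_apply, Fin.le_def, ite_mul, one_mul, zero_mul]
  rw [Fin.sum_univ_eq_sum_range (fun m => if (q : ℕ) ≤ m then w m else 0), ← sum_filter, hfilter]

lemma v9Left_row_eq {n i : ℕ} (hi1 : 1 ≤ i) (hi2 : 2 * i < n) (p : ℕ) :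
    ((n : ℝ) - p - 1) * v9Left n i p + ∑ m ∈ range (p + 1), v9Right n i m =
      (n - i) * v9Left n i p := by
  have hni : ((n - i : ℕ) : ℝ) = n - i := Nat.cast_sub (by omega)
  have hi : ((i - 1 : ℕ) : ℝ) = i - 1 := by rw [Nat.cast_sub hi1, Nat.cast_one]
  rw [sum_range_v9Right hi2, v9Left]
  rcases (show p < i - 1 ∨ p = i - 1 ∨ (i - 1 < p ∧ p < n - i) ∨ p = n - i ∨ n - i < p by omega)
    with h | rfl | h | rfl | h <;>
  split_ifs <;> first | (exfalso; omega) | (push_cast [hni, hi]; ring)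

lemma v9Right_row_eq {n i : ℕ} (hi1 : 1 ≤ i) (hi2 : 2 * i < n) {q : ℕ} (hq : q ≤ n) :
    ∑ m ∈ Ico q n, v9Left n i m + q * v9Right n i q = (n - i) * v9Right n i q := by
  have hni : ((n - i : ℕ) : ℝ) = n - i := Nat.cast_sub (by omega)
  rw [sum_Ico_eq_sub _ hq, sum_range_v9Left hi1 hi2, sum_range_v9Left hi1 hi2,
    v9Right]
  rcases (show q < i ∨ (i ≤ q ∧ q < n - i) ∨ q = n - i ∨ n - i < q by omega)
    with h | h | rfl | h <;>
  split_ifs <;> first | (exfalso; omega) | (push_cast [hni]; ring)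

theorem v9_eigenvector_Mbp_general (n : ℕ) (i : ℕ) (hi1 : 1 ≤ i)
    (hi2 : 2 * i < n) :
    v9 n i ≠ 0 ∧ (Mbp n).mulVec (v9 n i) = ((n : ℝ) - i) • v9 n i := by
  refine ⟨fun h => ?_, ?_⟩
  · have hpeak : v9 n i (Sum.inl ⟨i - 1, by omega⟩) = n - 2 * i := by simp [v9]
    have hi2' : (2 * i : ℝ) < n := by exact_mod_cast hi2
    rw [h, Pi.zero_apply] at hpeak
    linarith
  · rw [v9_eq_sumElim, Mbp, fromBlocks_mulVec]
    ext (p | q)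
    · simp only [Sum.elim_inl, Sum.elim_comp_inl, Sum.elim_comp_inr, Pi.add_apply, Pi.smul_apply,
        smul_eq_mul, An, mulVec_diagonal, Dn_transpose_mulVec_apply]
      exact v9Left_row_eq hi1 hi2 p
    · simp only [Sum.elim_inr, Sum.elim_comp_inl, Sum.elim_comp_inr, Pi.add_apply, Pi.smul_apply,
        smul_eq_mul, Cn, mulVec_diagonal, Dn_mulVec_apply]
      exact v9Right_row_eq hi1 hi2 q.is_lt.le

/-- For `n ≥ 1` and each integer `i` with `1 ≤ i ≤ ⌊n/2⌋`
(and moreover `i ≤ n/2 - 1` when `n` is even; equivalently `1 ≤ i` and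
`2i < n`), the vector `v9 n i` is an eigenvector of `M(BP_n)` with eigenvalue
`n - i`. -/
theorem v9_eigenvector_Mbp (n : ℕ) (hn : 1 ≤ n) (i : ℕ) (hi1 : 1 ≤ i)
    (hi2 : 2 * i < n) :
    v9 n i ≠ 0 ∧ (Mbp n).mulVec (v9 n i) = ((n : ℝ) - i) • v9 n i :=
  v9_eigenvector_Mbp_general n i hi1 hi2
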